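/- arXiv:1509.06220 — 2 statements merged into one kernel-verified Lean document; each statement's English description precedes it below -/
import Mathlib

section
/- Let H be a finite map from positive naturals to pairs of values satisfying the exchanger invariant: H(t) = (v, w) if and only if H(twin t) = (w, v). If H contains exactly the two entries t₁ ↦ (r₁, v₁) and t₂ ↦ (r₂, v₂) with t₁ ≠ t₂, then v₁ = r₂ and v₂ = r₁. -/
def twin (t : ℕ) : ℕ := if t % 2 = 1 then t + 1 else t - 1

theorem exchanger_two_entries {A : Type*} (H : ℕ → Option (A × A))
    (hdom0 : H 0 = none)
    (hinv : ∀ t : ℕ, 1 ≤ t → ∀ v w : A, H t = some (v, w) ↔ H (twin t) = some (w, v))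
    (t₁ t₂ : ℕ) (r₁ v₁ r₂ v₂ : A)
    (h₁ : H t₁ = some (r₁, v₁)) (h₂ : H t₂ = some (r₂, v₂))
    (hne : t₁ ≠ t₂)
    (honly : ∀ t : ℕ, H t ≠ none → t = t₁ ∨ t = t₂) :
    v₁ = r₂ ∧ v₂ = r₁ := by
  have ht₁ : 1 ≤ t₁ := by
    rcases Nat.eq_zero_or_pos t₁ with h | h
    · rw [h, hdom0] at h₁; exact absurd h₁ (by simp)
    · exact h
  have htw : H (twin t₁) = some (v₁, r₁) := (hinv t₁ ht₁ r₁ v₁).mp h₁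
  have hne' : twin t₁ ≠ t₁ := by
    unfold twin
    split <;> omega
  have := honly (twin t₁) (by rw [htw]; simp)
  rcases this with h | h
  · exact absurd h hne'
  · rw [h, h₂] at htw
    simp at htw
    exact ⟨htw.1.symm, htw.2⟩
end

section
/- Let ts₁ and ts₂ be strictly increasing lists of positive naturals, each containing no pair of twins (no t with both t and twin(t) in the list), and let zip ts₁ vs₁ ws₁ and zip ts₂ vs₂ ws₂ be the corresponding histories. If zip (map twin ts₁) ws₁ vs₁ ⊆ zip ts₂ vs₂ ws₂ and zip (map twin ts₂) ws₂ vs₂ ⊆ zip ts₁ vs₁ ws₁ as finite maps (with all lists of equal length and the maps injective on time-stamps), then map twin ts₁ = ts₂, ws₁ = vs₂, and vs₁ = ws₂. -/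
/-- The history (finite map) sending `ts[i] ↦ (vs[i], ws[i])`, as a list of bindings. -/
def zipH {A : Type*} (ts : List ℕ) (vs ws : List A) : List (ℕ × A × A) :=
  ts.zip (vs.zip ws)

/-!
Twin-freeness makes `twin` strictly monotone on `ts₁`, so `ts₁.map twin` is again strictly
increasing. The two inclusions of histories give inclusions of their key lists in both
directions, and two strictly increasing lists with the same elements are equal. Once the keys
agree and are distinct, the inclusion of histories can only pair each key with its own value,
which forces the value lists to coincide.
-/

-- `twin 0 = 0` by truncated subtraction, so `twin` is an involution on all of `ℕ`.
theorem twin_involutive : Function.Involutive twin := by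
  intro t
  unfold twin
  split_ifs <;> omega

theorem twin_lt_twin {a b : ℕ} (hab : a < b) (hb : b ≠ twin a) : twin a < twin b := by
  unfold twin at *
  split_ifs at * <;> omega

theorem List.SortedLT.map_twin {ts : List ℕ} (hts : ts.SortedLT)
    (hnt : ∀ a ∈ ts, ∀ b ∈ ts, b ≠ twin a) : (ts.map twin).SortedLT :=
  List.sortedLT_iff_pairwise.mpr <| List.pairwise_map.mpr <|
    hts.pairwise.imp_of_mem fun ha hb hab => twin_lt_twin hab (hnt _ ha _ hb)

namespace List

variable {α β : Type*}

theorem subset_of_zip_subset_zip {l₁ l₂ : List α} {m₁ m₂ : List β}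
    (h₁ : l₁.length ≤ m₁.length) (h₂ : l₂.length ≤ m₂.length) (h : l₁.zip m₁ ⊆ l₂.zip m₂) :
    l₁ ⊆ l₂ := by
  simpa only [map_fst_zip h₁, map_fst_zip h₂] using map_subset Prod.fst h

theorem eq_of_zip_subset_zip {ts : List α} {xs ys : List β} (hts : ts.Nodup)
    (hx : ts.length = xs.length) (hy : ts.length = ys.length) (h : ts.zip xs ⊆ ts.zip ys) :
    xs = ys := by
  refine ext_getElem (hx.symm.trans hy) fun i hix hiy => ?_
  have hi : i < ts.length := hx ▸ hix
  have hmem : (ts[i], xs[i]) ∈ ts.zip ys := h (by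
    rw [mem_iff_getElem]; exact ⟨i, by simp [hi, hix], by simp⟩)
  obtain ⟨j, hj, hji⟩ := mem_iff_getElem.mp hmem
  simp only [getElem_zip, Prod.mk.injEq] at hji
  obtain rfl : j = i := hts.getElem_inj_iff.mp hji.1
  exact hji.2.symm

theorem eq_and_eq_of_zip_eq_zip {l₁ l₂ : List α} {m₁ m₂ : List β}
    (h₁ : l₁.length = m₁.length) (h₂ : l₂.length = m₂.length) (h : l₁.zip m₁ = l₂.zip m₂) :
    l₁ = l₂ ∧ m₁ = m₂ := by
  simpa [unzip_zip h₁, unzip_zip h₂] using congrArg unzip h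

end List

theorem exchanger_client_quiescent_general {A : Type*}
    (ts₁ ts₂ : List ℕ) (vs₁ ws₁ vs₂ ws₂ : List A)
    (hlen₁v : ts₁.length = vs₁.length) (hlen₁w : ts₁.length = ws₁.length)
    (hlen₂v : ts₂.length = vs₂.length) (hlen₂w : ts₂.length = ws₂.length)
    (hsort₁ : ts₁.Chain' (· < ·)) (hsort₂ : ts₂.Chain' (· < ·))
    (hnt₁ : ∀ a ∈ ts₁, ∀ b ∈ ts₁, b ≠ twin a)
    (hsub₁ : ∀ p ∈ zipH (ts₁.map twin) ws₁ vs₁, p ∈ zipH ts₂ vs₂ ws₂)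
    (hsub₂ : ∀ p ∈ zipH (ts₂.map twin) ws₂ vs₂, p ∈ zipH ts₁ vs₁ ws₁) :
    ts₁.map twin = ts₂ ∧ ws₁ = vs₂ ∧ vs₁ = ws₂ := by
  have hkeys₁ : ts₁.map twin ⊆ ts₂ :=
    List.subset_of_zip_subset_zip (by simp only [List.length_zip, List.length_map]; omega)
      (by simp only [List.length_zip]; omega) hsub₁
  have hkeys₂ : ts₂ ⊆ ts₁.map twin := by
    have := List.map_subset twin <| List.subset_of_zip_subset_zip
      (by simp only [List.length_zip, List.length_map]; omega)
      (by simp only [List.length_zip]; omega) hsub₂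
    rwa [List.map_map, twin_involutive.comp_self, List.map_id] at this
  have hts : ts₁.map twin = ts₂ :=
    hkeys₁.antisymm_of_sortedLT hkeys₂ (hsort₁.sortedLT.map_twin hnt₁) hsort₂.sortedLT
  have hlen : ts₂.length = ts₁.length := by rw [← hts, List.length_map]
  rw [hts] at hsub₁
  have hvals : ws₁.zip vs₁ = vs₂.zip ws₂ :=
    List.eq_of_zip_subset_zip hsort₂.sortedLT.nodup (by simp only [List.length_zip]; omega)
      (by simp only [List.length_zip]; omega) hsub₁
  exact ⟨hts, List.eq_and_eq_of_zip_eq_zip (by omega) (by omega) hvals⟩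

theorem exchanger_client_quiescent {A : Type*}
    (ts₁ ts₂ : List ℕ) (vs₁ ws₁ vs₂ ws₂ : List A)
    (hlen₁v : ts₁.length = vs₁.length) (hlen₁w : ts₁.length = ws₁.length)
    (hlen₂v : ts₂.length = vs₂.length) (hlen₂w : ts₂.length = ws₂.length)
    (hpos₁ : ∀ t ∈ ts₁, 1 ≤ t) (hpos₂ : ∀ t ∈ ts₂, 1 ≤ t)
    (hsort₁ : ts₁.Chain' (· < ·)) (hsort₂ : ts₂.Chain' (· < ·))
    (hnt₁ : ∀ a ∈ ts₁, ∀ b ∈ ts₁, b ≠ twin a)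
    (hnt₂ : ∀ a ∈ ts₂, ∀ b ∈ ts₂, b ≠ twin a)
    (hsub₁ : ∀ p ∈ zipH (ts₁.map twin) ws₁ vs₁, p ∈ zipH ts₂ vs₂ ws₂)
    (hsub₂ : ∀ p ∈ zipH (ts₂.map twin) ws₂ vs₂, p ∈ zipH ts₁ vs₁ ws₁) :
    ts₁.map twin = ts₂ ∧ ws₁ = vs₂ ∧ vs₁ = ws₂ :=
  exchanger_client_quiescent_general ts₁ ts₂ vs₁ ws₁ vs₂ ws₂ hlen₁v hlen₁w hlen₂v hlen₂w hsort₁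
    hsort₂ hnt₁ hsub₁ hsub₂
end
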